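/- If ρ and u solve the mass conservation equation ∂ₜρ + div(ρu) = 0 with ρ smooth and positive, and w = ∇φ(ρ) with φ'(r)√r = √(K(r)) and a(r) = √(K(r)·r), then w satisfies ∂ₜw + ∇(uᵀw) = −∇(a(ρ) div u). -/

import Mathlib

noncomputable def pd {n : ℕ} (i : Fin n) (f : (Fin n → ℝ) → ℝ) (x : Fin n → ℝ) : ℝ :=
  fderiv ℝ f x (Pi.single i 1)

/-!
Set `Φ = φ ∘ ρ`, so that `w = ∇Φ`. Multiplying the continuity equation by `φ'(ρ)` and using
`φ'(r) r = a(r)` gives the renormalized equation `∂ₜΦ + u·∇Φ = -a(ρ) div u`. Its spatial gradient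
is the claim, because `∇∂ₜΦ = ∂ₜ∇Φ = ∂ₜw` by the symmetry of second derivatives of the `C²`
function `Φ`.
-/

open Function

section SliceDerivatives

variable {E G : Type*} [NormedAddCommGroup E] [NormedSpace ℝ E]
  [NormedAddCommGroup G] [NormedSpace ℝ G]

theorem deriv_comp_prodMk_left {F : ℝ × E → G} {t : ℝ} {x : E}
    (hF : DifferentiableAt ℝ F (t, x)) :
    deriv (fun s => F (s, x)) t = fderiv ℝ F (t, x) (1, 0) :=
  (hF.hasFDerivAt.comp_hasDerivAt t ((hasDerivAt_id t).prodMk (hasDerivAt_const t x))).deriv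

theorem fderiv_comp_prodMk_right_apply {F : ℝ × E → G} {t : ℝ} {x : E}
    (hF : DifferentiableAt ℝ F (t, x)) (v : E) :
    fderiv ℝ (fun y => F (t, y)) x v = fderiv ℝ F (t, x) (0, v) :=
  DFunLike.congr_fun (hF.hasFDerivAt.comp x (hasFDerivAt_prodMk_right t x)).fderiv v

theorem ContDiff.differentiable_fderiv_apply {F : E → G} (hF : ContDiff ℝ 2 F) (z : E) :
    Differentiable ℝ (fun q => fderiv ℝ F q z) :=
  ((hF.fderiv_right (m := 1) le_rfl).clm_apply contDiff_const).differentiable one_ne_zero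

theorem fderiv_fderiv_apply_comm {F : E → G} {p : E} (hF : ContDiffAt ℝ 2 F p) (v w : E) :
    fderiv ℝ (fun q => fderiv ℝ F q v) p w = fderiv ℝ (fun q => fderiv ℝ F q w) p v := by
  have hF' : DifferentiableAt ℝ (fderiv ℝ F) p :=
    (hF.fderiv_right (m := 1) le_rfl).differentiableAt one_ne_zero
  have fderiv_apply : ∀ z y,
      fderiv ℝ (fun q => fderiv ℝ F q z) p y = fderiv ℝ (fderiv ℝ F) p y z := fun z y => by
    simp [fderiv_clm_apply hF' (differentiableAt_const z)]
  rw [fderiv_apply, fderiv_apply]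
  exact (hF.isSymmSndFDerivAt (by simp)).eq w v

theorem deriv_fderiv_comm {f : ℝ → E → G} (hf : ContDiff ℝ 2 (uncurry f)) (t : ℝ) (x v : E) :
    deriv (fun s => fderiv ℝ (f s) x v) t = fderiv ℝ (fun y => deriv (fun s => f s y) t) x v := by
  have hdiff : ∀ p, DifferentiableAt ℝ (uncurry f) p := fun p =>
    (hf.differentiable two_ne_zero).differentiableAt
  calc deriv (fun s => fderiv ℝ (f s) x v) t
      = deriv (fun s => fderiv ℝ (uncurry f) (s, x) (0, v)) t := by
        congr 1
        funext s
        exact fderiv_comp_prodMk_right_apply (hdiff (s, x)) v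
    _ = fderiv ℝ (fun q => fderiv ℝ (uncurry f) q (0, v)) (t, x) (1, 0) :=
        deriv_comp_prodMk_left (hf.differentiable_fderiv_apply _ _)
    _ = fderiv ℝ (fun q => fderiv ℝ (uncurry f) q (1, 0)) (t, x) (0, v) :=
        fderiv_fderiv_apply_comm hf.contDiffAt _ _
    _ = fderiv ℝ (fun y => fderiv ℝ (uncurry f) (t, y) (1, 0)) x v :=
        (fderiv_comp_prodMk_right_apply (hf.differentiable_fderiv_apply _ _) v).symm
    _ = fderiv ℝ (fun y => deriv (fun s => f s y) t) x v := by
        congr 2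
        funext y
        exact (deriv_comp_prodMk_left (hdiff (t, y))).symm

theorem ContDiff.differentiable_fderiv_slice {f : ℝ → E → G} (hf : ContDiff ℝ 2 (uncurry f))
    (t : ℝ) (v : E) : Differentiable ℝ (fun y => fderiv ℝ (f t) y v) := by
  have hslice : (fun y => fderiv ℝ (f t) y v) = fun y => fderiv ℝ (uncurry f) (t, y) (0, v) :=
    funext fun y => fderiv_comp_prodMk_right_apply ((hf.differentiable two_ne_zero) _) v
  rw [hslice]
  exact (hf.differentiable_fderiv_apply _).comp (differentiable_const t |>.prodMk differentiable_id)

theorem ContDiff.differentiable_deriv_slice {f : ℝ → E → G} (hf : ContDiff ℝ 2 (uncurry f))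
    (t : ℝ) : Differentiable ℝ (fun y => deriv (fun s => f s y) t) := by
  have hslice : (fun y => deriv (fun s => f s y) t) = fun y => fderiv ℝ (uncurry f) (t, y) (1, 0) :=
    funext fun y => deriv_comp_prodMk_left ((hf.differentiable two_ne_zero) _)
  rw [hslice]
  exact (hf.differentiable_fderiv_apply _).comp (differentiable_const t |>.prodMk differentiable_id)

end SliceDerivatives

section PartialDerivatives

variable {n : ℕ} {f g : (Fin n → ℝ) → ℝ} {x : Fin n → ℝ} (i : Fin n)

theorem pd_add (hf : DifferentiableAt ℝ f x) (hg : DifferentiableAt ℝ g x) :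
    pd i (fun y => f y + g y) x = pd i f x + pd i g x := by
  simp [pd, fderiv_fun_add hf hg]

theorem pd_neg : pd i (fun y => -f y) x = -pd i f x := by
  simp [pd, fderiv_fun_neg]

theorem pd_mul (hf : DifferentiableAt ℝ f x) (hg : DifferentiableAt ℝ g x) :
    pd i (fun y => f y * g y) x = f x * pd i g x + g x * pd i f x := by
  simp [pd, fderiv_fun_mul hf hg]

theorem pd_comp {φ : ℝ → ℝ} (hφ : DifferentiableAt ℝ φ (f x)) (hf : DifferentiableAt ℝ f x) :
    pd i (fun y => φ (f y)) x = deriv φ (f x) * pd i f x := by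
  unfold pd
  rw [show (fun y => φ (f y)) = φ ∘ f from rfl,
    (hφ.hasDerivAt.comp_hasFDerivAt x hf.hasFDerivAt).fderiv]
  simp

end PartialDerivatives

theorem renormalized_continuity_equation {n : ℕ} {ρ : ℝ → (Fin n → ℝ) → ℝ}
    {u : ℝ → (Fin n → ℝ) → (Fin n → ℝ)} {φ : ℝ → ℝ} {t : ℝ} {x : Fin n → ℝ}
    (hρt : DifferentiableAt ℝ (fun s => ρ s x) t) (hρx : DifferentiableAt ℝ (ρ t) x)
    (hux : ∀ j, DifferentiableAt ℝ (fun y => u t y j) x) (hφ : DifferentiableAt ℝ φ (ρ t x))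
    (hmass : deriv (fun s => ρ s x) t + ∑ j, pd j (fun y => ρ t y * u t y j) x = 0) :
    deriv (fun s => φ (ρ s x)) t + ∑ j, u t x j * pd j (fun y => φ (ρ t y)) x
      = -(deriv φ (ρ t x) * ρ t x * ∑ j, pd j (fun y => u t y j) x) := by
  have hdiv : ∑ j, pd j (fun y => ρ t y * u t y j) x
      = ∑ j, u t x j * pd j (ρ t) x + ρ t x * ∑ j, pd j (fun y => u t y j) x := by
    simp only [pd_mul _ hρx (hux _), Finset.sum_add_distrib, Finset.mul_sum, add_comm]
  have htransport : ∑ j, u t x j * pd j (fun y => φ (ρ t y)) x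
      = deriv φ (ρ t x) * ∑ j, u t x j * pd j (ρ t) x := by
    simp only [pd_comp _ hφ hρx, Finset.mul_sum, mul_left_comm]
  have hchain : deriv (fun s => φ (ρ s x)) t = deriv φ (ρ t x) * deriv (fun s => ρ s x) t :=
    deriv_comp t hφ hρt
  rw [hchain, htransport]
  rw [hdiv] at hmass
  linear_combination deriv φ (ρ t x) * hmass

theorem sqrt_mul_eq_of_mul_sqrt_eq {d k r : ℝ} (hr : 0 ≤ r) (h : d * √r = √k) :
    √(k * r) = d * r := by
  rw [Real.sqrt_mul' _ hr, ← h, mul_assoc, Real.mul_self_sqrt hr]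

theorem extended_velocity_equation_general {n : ℕ}
    (ρ : ℝ → (Fin n → ℝ) → ℝ) (u : ℝ → (Fin n → ℝ) → (Fin n → ℝ)) (K φ : ℝ → ℝ)
    (hρ : ContDiff ℝ 2 (fun p : ℝ × (Fin n → ℝ) => ρ p.1 p.2))
    (hρpos : ∀ t x, 0 < ρ t x)
    (hu : ContDiff ℝ 2 (fun p : ℝ × (Fin n → ℝ) => u p.1 p.2))
    (hφ : ContDiffOn ℝ 2 φ (Set.Ioi 0))
    (hφ' : ∀ r > (0:ℝ), deriv φ r * Real.sqrt r = Real.sqrt (K r))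
    (a : ℝ → ℝ) (ha : ∀ r > (0:ℝ), a r = Real.sqrt (K r * r))
    (w : ℝ → (Fin n → ℝ) → (Fin n → ℝ))
    (hw : ∀ t x i, w t x i = pd i (fun y => φ (ρ t y)) x)
    (hmass : ∀ t x,
      deriv (fun s => ρ s x) t + ∑ i, pd i (fun y => ρ t y * u t y i) x = 0) :
    ∀ (t : ℝ) (x : Fin n → ℝ) (i : Fin n),
      deriv (fun s => w s x i) t
        + pd i (fun y => ∑ j, u t y j * w t y j) x
      = - pd i (fun y => a (ρ t y) * ∑ j, pd j (fun z => u t z j) y) x := by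
  intro t x i
  set Φ : ℝ → (Fin n → ℝ) → ℝ := fun s y => φ (ρ s y)
  have hΦ : ContDiff ℝ 2 (uncurry Φ) := hφ.comp_contDiff hρ fun p => hρpos p.1 p.2
  have hρx : Differentiable ℝ (ρ t) :=
    (hρ.comp (contDiff_prodMk_right t)).differentiable two_ne_zero
  have hux : ∀ j, Differentiable ℝ (fun y => u t y j) := fun j y =>
    differentiableAt_pi.1 ((hu.comp (contDiff_prodMk_right t)).differentiable two_ne_zero y) j
  have hrenorm : ∀ y, deriv (fun s => Φ s y) t + ∑ j, u t y j * w t y j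
      = -(a (ρ t y) * ∑ j, pd j (fun z => u t z j) y) := fun y => by
    have hr := hρpos t y
    rw [ha _ hr, sqrt_mul_eq_of_mul_sqrt_eq hr.le (hφ' _ hr)]
    simp only [hw]
    exact renormalized_continuity_equation
      ((hρ.comp (contDiff_prodMk_left y)).differentiable two_ne_zero t) (hρx y) (fun j => hux j y)
      ((hφ.differentiableOn two_ne_zero).differentiableAt (Ioi_mem_nhds hr)) (hmass t y)
  have huw : Differentiable ℝ (fun y => ∑ j, u t y j * w t y j) := by
    simp only [hw]
    exact Differentiable.fun_sum fun j _ =>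
      (hux j).mul (hΦ.differentiable_fderiv_slice t (Pi.single j 1))
  calc deriv (fun s => w s x i) t + pd i (fun y => ∑ j, u t y j * w t y j) x
      = pd i (fun y => deriv (fun s => Φ s y) t) x + pd i (fun y => ∑ j, u t y j * w t y j) x := by
        simp only [hw]
        exact congrArg (· + _) (deriv_fderiv_comm hΦ t x (Pi.single i 1))
    _ = pd i (fun y => deriv (fun s => Φ s y) t + ∑ j, u t y j * w t y j) x :=
        (pd_add i (hΦ.differentiable_deriv_slice t x) (huw x)).symm
    _ = -pd i (fun y => a (ρ t y) * ∑ j, pd j (fun z => u t z j) y) x := by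
        simp only [hrenorm, pd_neg]

/-- If `∂ₜρ + div(ρu) = 0` and `w = ∇φ(ρ)` with `φ'(r)√r = √(K(r))`,
`a(r) = √(K(r)r)`, then `∂ₜw + ∇(uᵀw) = −∇(a(ρ) div u)`. -/
theorem extended_velocity_equation {n : ℕ}
    (ρ : ℝ → (Fin n → ℝ) → ℝ) (u : ℝ → (Fin n → ℝ) → (Fin n → ℝ)) (K φ : ℝ → ℝ)
    (hρ : ContDiff ℝ 2 (fun p : ℝ × (Fin n → ℝ) => ρ p.1 p.2))
    (hρpos : ∀ t x, 0 < ρ t x)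
    (hu : ContDiff ℝ 2 (fun p : ℝ × (Fin n → ℝ) => u p.1 p.2))
    (hK : ContDiffOn ℝ 1 K (Set.Ioi 0)) (hKpos : ∀ r > (0:ℝ), 0 < K r)
    (hφ : ContDiffOn ℝ 2 φ (Set.Ioi 0))
    (hφ' : ∀ r > (0:ℝ), deriv φ r * Real.sqrt r = Real.sqrt (K r))
    (a : ℝ → ℝ) (ha : ∀ r > (0:ℝ), a r = Real.sqrt (K r * r))
    (w : ℝ → (Fin n → ℝ) → (Fin n → ℝ))
    (hw : ∀ t x i, w t x i = pd i (fun y => φ (ρ t y)) x)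
    (hmass : ∀ t x,
      deriv (fun s => ρ s x) t + ∑ i, pd i (fun y => ρ t y * u t y i) x = 0) :
    ∀ (t : ℝ) (x : Fin n → ℝ) (i : Fin n),
      deriv (fun s => w s x i) t
        + pd i (fun y => ∑ j, u t y j * w t y j) x
      = - pd i (fun y => a (ρ t y) * ∑ j, pd j (fun z => u t z j) y) x :=
  extended_velocity_equation_general ρ u K φ hρ hρpos hu hφ hφ' a ha w hw hmass
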